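/- arXiv:1503.00389 — 7 statements merged into one kernel-verified Lean document; each statement's English description precedes it below -/
import Mathlib

section
/- Let Γ be a free group with countable basis {γ_i : i ∈ ℕ} and G a finite group. Let μ be the Borel probability measure on Hom(Γ, G) determined by μ(Cyl(e_1,…,e_k; σ_1,…,σ_k)) = 1/|G|^k for all cylinder sets. Then for every automorphism φ of Γ, the map h ↦ h ∘ φ^{-1} on Hom(Γ, G) preserves μ. -/
open MeasureTheory

/-- The σ-algebra on `Hom(FreeGroup ℕ, G)` generated by pointwise evaluation,
with `G` carrying the discrete σ-algebra. -/
noncomputable instance homMS (G : Type) [Group G] :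
    MeasurableSpace (FreeGroup ℕ →* G) :=
  MeasurableSpace.comap (fun f => (f : FreeGroup ℕ → G))
    (@MeasurableSpace.pi (FreeGroup ℕ) (fun _ => G) (fun _ => ⊤))

/-!
Write `ψ = φ⁻¹`. The preimage of the cylinder `Cyl(s; σ)` under `h ↦ h ∘ ψ` is the event
`{h | h (ψ γᵢ) = σᵢ for i ∈ s}`. It only depends on the values of `h` on a finite set `T` of
generators with `ψ γᵢ ∈ ⟨γ_T⟩`, so its measure is `|G|^{-|T|}` times the number of homomorphisms
`Q → G` taking the values `σᵢ` at the `γᵢ`, where `Q = ψ⁻¹⟨γ_T⟩ ≅ ⟨γ_T⟩` and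
`|Hom(Q, G)| = |G|^{|T|}`.

By the Reidemeister–Schreier method, `Q` is free on the nontrivial Schreier generators
`r(c) γ_b r(c γ_b)⁻¹` of a Schreier transversal `r` of `Q\F`, and the `γᵢ ∈ Q` are among
them (the loops at the trivial coset). Restricting a homomorphism `Q → G` to the `γᵢ` is therefore
a coordinate projection, whose fibres all have `|Hom(Q, G)| / |G|^{|s|}` elements. Freeness comes
from holonomy: a labelling of the edges of the Schreier graph by elements of `G` yields, through
the semidirect product `(Q\F → G) ⋊ F`, a map `F → G` that is multiplicative on `Q` and sends each
Schreier generator to the label of its edge.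

Cylinders form a π-system generating the σ-algebra, so both measures agree.
-/

open MulOpposite
open scoped RightActions ENNReal

theorem MonoidHom.card_preimage_singleton_mul_card {A B : Type*} [Group A] [Group B]
    {r : A →* B} (hr : Function.Surjective r) (b : B) :
    Nat.card (r ⁻¹' {b}) * Nat.card B = Nat.card A := by
  rw [Nat.card_congr (MonoidHom.fiberEquivKerOfSurjective hr b), ← Subgroup.card_top (G := B),
    ← MonoidHom.range_eq_top.mpr hr, ← Subgroup.index_ker, Subgroup.card_mul_index]

theorem Subgroup.monoidHom_ext_of_le_closure {F G : Type*} [Group F] [Group G] {H : Subgroup F}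
    {S : Set F} (hSH : S ⊆ H) (hH : H ≤ closure S) {f f' : H →* G}
    (h : ∀ s (hs : s ∈ S), f ⟨s, hSH hs⟩ = f' ⟨s, hSH hs⟩) : f = f' := by
  obtain rfl : H = closure S := le_antisymm hH (closure_le _ |>.mpr hSH)
  exact MonoidHom.eq_of_eqOn_dense closure_closure_coe_preimage fun s hs => h s hs

theorem ENNReal.natCast_mul_inv_pow_eq {a g k m : ℕ} (hg : g ≠ 0) (h : a * g ^ k = g ^ m) :
    (a : ℝ≥0∞) * (g : ℝ≥0∞)⁻¹ ^ m = (g : ℝ≥0∞)⁻¹ ^ k := by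
  have h' : (a : ℝ≥0∞) * (g : ℝ≥0∞) ^ k = (g : ℝ≥0∞) ^ m := by exact_mod_cast h
  have ha : (a : ℝ≥0∞) ≠ 0 := by
    rintro ha
    rw [ha, zero_mul, eq_comm] at h'
    exact pow_ne_zero m (by exact_mod_cast hg) h'
  rw [← ENNReal.inv_pow, ← ENNReal.inv_pow, ← h', ENNReal.mul_inv (.inr (by simp)) (.inl (by simp)),
    ← mul_assoc, ENNReal.mul_inv_cancel ha (by simp), one_mul]

namespace FreeGroup

variable {α : Type*}

lemma mk_singleton_false (b : α) : mk [(b, false)] = (of b)⁻¹ := by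
  rw [of, inv_mk]; rfl

lemma range_map_subtype_val_mono {T U : Finset α} (h : T ⊆ U) :
    (map ((↑) : T → α)).range ≤ (map ((↑) : U → α)).range := by
  rw [range_map, range_map]
  refine Subgroup.closure_mono (Set.image_mono ?_)
  rintro _ ⟨t, rfl⟩
  exact ⟨⟨t, h t.2⟩, rfl⟩

lemma exists_finset_mem_range_map (w : FreeGroup α) :
    ∃ T : Finset α, w ∈ (map ((↑) : T → α)).range := by
  classical
  induction w using FreeGroup.induction_on with
  | C1 => exact ⟨∅, one_mem _⟩
  | of a => exact ⟨{a}, of ⟨a, Finset.mem_singleton_self a⟩, map.of⟩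
  | inv_of a ih =>
    obtain ⟨T, hT⟩ := ih
    exact ⟨T, inv_mem hT⟩
  | mul u w hu hw =>
    obtain ⟨T, hT⟩ := hu
    obtain ⟨T', hT'⟩ := hw
    exact ⟨T ∪ T', mul_mem (range_map_subtype_val_mono Finset.subset_union_left hT)
      (range_map_subtype_val_mono Finset.subset_union_right hT')⟩

variable {G : Type*} [Group G] (T : Finset α)

def valuesOn (h : FreeGroup α →* G) : T → G := fun t => h (of t)

lemma lift_valuesOn (h : FreeGroup α →* G) : lift (valuesOn T h) = h.comp (map (↑)) :=
  ext_hom _ _ fun t => by simp [valuesOn]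

variable (ψ : FreeGroup α ≃* FreeGroup α)

/-- The subgroup `ψ⁻¹ ⟨of t | t ∈ T⟩` is free on `T`. -/
noncomputable def valuesOnEquivHom :
    (T → G) ≃ ((map ((↑) : T → α)).range.map ψ.symm.toMonoidHom →* G) :=
  lift.trans (MulEquiv.monoidHomCongrLeftEquiv
    ((MonoidHom.ofInjective (map_injective Subtype.val_injective)).trans (ψ.symm.subgroupMap _)))

lemma valuesOnEquivHom_valuesOn (h : FreeGroup α →* G) (q) :
    valuesOnEquivHom T ψ (valuesOn T h) q = h (ψ q) := by
  rw [valuesOnEquivHom, Equiv.trans_apply, MulEquiv.monoidHomCongrLeftEquiv_apply,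
    MonoidHom.comp_apply, lift_valuesOn, MonoidHom.comp_apply]
  erw [MulEquiv.symm_trans_apply, MonoidHom.apply_ofInjective_symm]
  rfl

end FreeGroup

namespace Schreier

open FreeGroup (of norm)

variable {α : Type*} (Q : Subgroup (FreeGroup α))

/-- The right cosets `Q\F`, realised as `Fᵐᵒᵖ ⧸ Q.op` so that `F` acts on them on the right
through `<•`. -/
abbrev RightCosets := (FreeGroup α)ᵐᵒᵖ ⧸ Q.op

def mk (w : FreeGroup α) : RightCosets Q := QuotientGroup.mk (op w)

variable {Q}

@[simp] lemma mk_smul (w u : FreeGroup α) : mk Q w <• u = mk Q (w * u) := rfl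

lemma mk_eq_mk_iff {u w : FreeGroup α} : mk Q u = mk Q w ↔ w * u⁻¹ ∈ Q := by
  rw [mk, mk, QuotientGroup.eq, Subgroup.mem_op]
  simp

lemma mk_eq_mk_one_iff {w : FreeGroup α} : mk Q w = mk Q 1 ↔ w ∈ Q := by
  rw [mk_eq_mk_iff]
  simp [Q.inv_mem_iff]

lemma mk_surjective : Function.Surjective (mk Q) := by
  rintro ⟨⟨w⟩⟩
  exact ⟨w, rfl⟩

section Holonomy

variable {G : Type*} [Group G]

variable (Q) in
attribute [local instance] arrowMulDistribMulAction in
def rightShift : FreeGroup α →* MulAut (RightCosets Q → G) :=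
  (MulDistribMulAction.toMulAut (FreeGroup α)ᵐᵒᵖ (RightCosets Q → G)).comp
    (MulEquiv.inv' (FreeGroup α)).toMonoidHom

@[simp] lemma rightShift_apply (u : FreeGroup α) (f : RightCosets Q → G) (c : RightCosets Q) :
    rightShift Q u f c = f (c <• u) := by
  change f ((op u)⁻¹⁻¹ • c) = _
  rw [inv_inv]

def holonomyHom (x : RightCosets Q × α → G) :
    FreeGroup α →* (RightCosets Q → G) ⋊[rightShift Q] FreeGroup α :=
  FreeGroup.lift fun b => SemidirectProduct.inl (fun c => x (c, b)) * SemidirectProduct.inr (of b)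

lemma right_holonomyHom (x : RightCosets Q × α → G) (w : FreeGroup α) :
    (holonomyHom x w).right = w := by
  have : SemidirectProduct.rightHom.comp (holonomyHom x) = MonoidHom.id _ :=
    FreeGroup.ext_hom _ _ fun b => by simp [holonomyHom]
  exact DFunLike.congr_fun this w

/-- The product of the labels `x (c', b)` along the path spelled by `w` in the Schreier graph,
starting at `c`; the edge `(c', b)` goes from `c'` to `c' <• of b`. -/
def holonomy (x : RightCosets Q × α → G) (w : FreeGroup α) (c : RightCosets Q) : G :=
  (holonomyHom x w).left c

lemma holonomy_mul (x : RightCosets Q × α → G) (u w : FreeGroup α) (c : RightCosets Q) :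
    holonomy x (u * w) c = holonomy x u c * holonomy x w (c <• u) := by
  simp [holonomy, SemidirectProduct.mul_left, right_holonomyHom]

lemma holonomy_one (x : RightCosets Q × α → G) (c : RightCosets Q) : holonomy x 1 c = 1 := by
  simp [holonomy]

lemma holonomy_of (x : RightCosets Q × α → G) (b : α) (c : RightCosets Q) :
    holonomy x (of b) c = x (c, b) := by
  simp [holonomy, holonomyHom]

lemma holonomy_inv (x : RightCosets Q × α → G) (u : FreeGroup α) (c : RightCosets Q) :
    holonomy x u⁻¹ (c <• u) = (holonomy x u c)⁻¹ := by
  have h := holonomy_mul x u u⁻¹ c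
  rw [mul_inv_cancel, holonomy_one] at h
  exact eq_inv_of_mul_eq_one_right h.symm

variable (Q) in
def loopHolonomy (x : RightCosets Q × α → G) : Q →* G where
  toFun q := holonomy x q (mk Q 1)
  map_one' := holonomy_one x _
  map_mul' q q' := by
    rw [Subgroup.coe_mul, holonomy_mul, mk_smul, one_mul, mk_eq_mk_one_iff.mpr q.2]

end Holonomy

section Transversal

variable [DecidableEq α]

noncomputable def minNorm (c : RightCosets Q) : ℕ :=
  sInf {n | ∃ w, mk Q w = c ∧ norm w = n}

lemma exists_norm_eq_minNorm (c : RightCosets Q) : ∃ w, mk Q w = c ∧ norm w = minNorm c := by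
  obtain ⟨w, hw⟩ := mk_surjective c
  exact Nat.sInf_mem (s := {n | ∃ w, mk Q w = c ∧ norm w = n}) ⟨_, w, hw, rfl⟩

lemma minNorm_mk_le (w : FreeGroup α) : minNorm (mk Q w) ≤ norm w :=
  Nat.sInf_le ⟨w, rfl, rfl⟩

lemma exists_minNorm_lt {c : RightCosets Q} (hc : c ≠ mk Q 1) :
    ∃ p : RightCosets Q × (α × Bool),
      minNorm p.1 < minNorm c ∧ p.1 <• FreeGroup.mk [p.2] = c := by
  obtain ⟨w, rfl, hw⟩ := exists_norm_eq_minNorm c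
  have hL : w.toWord ≠ [] := fun h => hc (by rw [FreeGroup.toWord_eq_nil_iff.mp h])
  refine ⟨(mk Q (FreeGroup.mk w.toWord.dropLast), w.toWord.getLast hL), ?_, ?_⟩
  · calc minNorm _ ≤ norm (FreeGroup.mk w.toWord.dropLast) := minNorm_mk_le _
      _ ≤ w.toWord.dropLast.length := FreeGroup.norm_mk_le
      _ < w.toWord.length := by
        rw [List.length_dropLast]
        have := List.length_pos_iff.mpr hL
        omega
      _ = minNorm (mk Q w) := hw
  · rw [mk_smul, FreeGroup.mul_mk, List.dropLast_append_getLast, FreeGroup.mk_toWord]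

/-- A Schreier transversal: the representative of a coset extends, by one letter, the
representative of a coset of smaller `minNorm`. -/
noncomputable def schreierRep (c : RightCosets Q) : FreeGroup α :=
  open Classical in
  if h : c = mk Q 1 then 1
  else schreierRep (exists_minNorm_lt h).choose.1 * FreeGroup.mk [(exists_minNorm_lt h).choose.2]
termination_by minNorm c
decreasing_by exact (exists_minNorm_lt h).choose_spec.1

lemma schreierRep_mk_one : schreierRep (mk Q 1) = 1 := by
  rw [schreierRep, dif_pos rfl]

lemma exists_schreierRep_eq {c : RightCosets Q} (hc : c ≠ mk Q 1) :
    ∃ p ℓ, minNorm p < minNorm c ∧ p <• FreeGroup.mk [ℓ] = c ∧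
      schreierRep c = schreierRep p * FreeGroup.mk [ℓ] := by
  obtain ⟨hlt, hc'⟩ := (exists_minNorm_lt hc).choose_spec
  exact ⟨_, _, hlt, hc', by rw [schreierRep, dif_neg hc]⟩

theorem schreierRep_induction {P : RightCosets Q → Prop} (one : P (mk Q 1))
    (step : ∀ p ℓ, schreierRep (p <• FreeGroup.mk [ℓ]) = schreierRep p * FreeGroup.mk [ℓ] →
      P p → P (p <• FreeGroup.mk [ℓ]))
    (c : RightCosets Q) : P c := by
  induction hn : minNorm c using Nat.strong_induction_on generalizing c with
  | _ n ih =>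
    by_cases hc : c = mk Q 1
    · exact hc ▸ one
    obtain ⟨p, ℓ, hlt, rfl, hrep⟩ := exists_schreierRep_eq hc
    exact step p ℓ hrep (ih _ (hn ▸ hlt) p rfl)

lemma mk_schreierRep (c : RightCosets Q) : mk Q (schreierRep c) = c :=
  schreierRep_induction (P := fun c => mk Q (schreierRep c) = c) (by rw [schreierRep_mk_one])
    (fun p ℓ hrep ih => by rw [hrep, ← mk_smul, ih]) c

noncomputable def schreierGen (e : RightCosets Q × α) : FreeGroup α :=
  schreierRep e.1 * of e.2 * (schreierRep (e.1 <• of e.2))⁻¹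

lemma schreierGen_mem (e : RightCosets Q × α) : schreierGen e ∈ Q := by
  have h : mk Q (schreierRep e.1 * of e.2) = mk Q (schreierRep (e.1 <• of e.2)) := by
    rw [← mk_smul, mk_schreierRep, mk_schreierRep]
  simpa [schreierGen, mul_assoc] using Q.inv_mem (mk_eq_mk_iff.mp h)

lemma schreierGen_mk_one {i : α} (hi : of i ∈ Q) : schreierGen (mk Q 1, i) = of i := by
  rw [schreierGen, mk_smul, one_mul, mk_eq_mk_one_iff.mpr hi, schreierRep_mk_one, one_mul,
    inv_one, mul_one]

lemma le_closure_schreierGen : Q ≤ Subgroup.closure (Set.range (schreierGen (Q := Q))) := by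
  set Y := Subgroup.closure (Set.range (schreierGen (Q := Q)))
  -- `schreierRep c * w * (schreierRep (c <• w))⁻¹` is multiplicative along the path of `w`.
  have key : ∀ w (c : RightCosets Q), schreierRep c * w * (schreierRep (c <• w))⁻¹ ∈ Y := by
    intro w
    induction w using FreeGroup.induction_on with
    | C1 => simp [Y.one_mem]
    | of b => exact fun c => Subgroup.subset_closure ⟨(c, b), rfl⟩
    | inv_of b ih =>
      intro c
      simpa [← op_smul_mul, mul_assoc] using Y.inv_mem (ih (c <• (of b)⁻¹))
    | mul u w hu hw =>
      intro c
      simpa [← op_smul_mul, mul_assoc] using Y.mul_mem (hu c) (hw (c <• u))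
  intro w hw
  simpa [schreierRep_mk_one, mk_eq_mk_one_iff.mpr hw] using key w (mk Q 1)

end Transversal

section Basis

variable [DecidableEq α] {G : Type*} [Group G]

lemma holonomy_schreierRep {x : RightCosets Q × α → G} (hx : ∀ e, schreierGen e = 1 → x e = 1)
    (c : RightCosets Q) : holonomy x (schreierRep c) (mk Q 1) = 1 := by
  induction c using schreierRep_induction with
  | one => rw [schreierRep_mk_one, holonomy_one]
  | step p ℓ hrep ih =>
    rw [hrep, holonomy_mul, ih, one_mul, mk_smul, one_mul, mk_schreierRep]
    obtain ⟨b, _ | _⟩ := ℓ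
    · set d := p <• FreeGroup.mk [(b, false)]
      have hd : d <• of b = p := by simp [d, FreeGroup.mk_singleton_false]
      rw [← hd, FreeGroup.mk_singleton_false, holonomy_inv, holonomy_of, hx (d, b), inv_one]
      rw [schreierGen, hd, hrep, FreeGroup.mk_singleton_false, inv_mul_cancel_right,
        mul_inv_cancel]
    · change schreierRep (p <• of b) = schreierRep p * of b at hrep
      exact (holonomy_of x b p).trans (hx (p, b) (by rw [schreierGen, hrep, mul_inv_cancel]))

lemma holonomy_schreierGen {x : RightCosets Q × α → G} (hx : ∀ e, schreierGen e = 1 → x e = 1)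
    (e : RightCosets Q × α) : holonomy x (schreierGen e) (mk Q 1) = x e := by
  obtain ⟨c, b⟩ := e
  have hd : mk Q 1 <• (schreierRep c * of b) = mk Q 1 <• schreierRep (c <• of b) := by
    rw [mk_smul, mk_smul, one_mul, one_mul, ← mk_smul, mk_schreierRep, mk_schreierRep]
  rw [schreierGen]
  dsimp only
  rw [holonomy_mul, holonomy_mul, hd, holonomy_inv, holonomy_schreierRep hx,
    holonomy_schreierRep hx, one_mul, mk_smul, one_mul, mk_schreierRep, holonomy_of, inv_one,
    mul_one]

variable (Q G) in
noncomputable def restrictSchreierGen (f : Q →* G) : {e // schreierGen (Q := Q) e ≠ 1} → G :=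
  fun e => f ⟨schreierGen e.1, schreierGen_mem e.1⟩

theorem restrictSchreierGen_bijective : Function.Bijective (restrictSchreierGen Q G) := by
  constructor
  · intro f f' h
    refine Subgroup.monoidHom_ext_of_le_closure (by rintro _ ⟨e, rfl⟩; exact schreierGen_mem e)
      le_closure_schreierGen ?_
    rintro _ ⟨e, rfl⟩
    by_cases he : schreierGen e = 1
    · have h1 : (⟨schreierGen e, schreierGen_mem e⟩ : Q) = 1 := Subtype.ext he
      rw [h1, map_one, map_one]
    · exact congrFun h ⟨e, he⟩
  · intro τ
    classical
    let x e := if h : schreierGen e = 1 then 1 else τ ⟨e, h⟩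
    refine ⟨loopHolonomy Q x, funext fun e => ?_⟩
    exact (holonomy_schreierGen (fun e he => dif_pos he) e.1).trans (dif_neg e.2)

theorem card_hom_fiber_mul_card_pow (s : Finset α) (hs : ∀ i ∈ s, of i ∈ Q) (σ : α → G) :
    Nat.card {f : Q →* G // ∀ i (hi : i ∈ s), f ⟨of i, hs i hi⟩ = σ i} * Nat.card G ^ s.card =
      Nat.card (Q →* G) := by
  let E := {e // schreierGen (Q := Q) e ≠ 1}
  let ι : s → E := fun i =>
    ⟨(mk Q 1, i), by rw [schreierGen_mk_one (hs i i.2)]; exact FreeGroup.of_ne_one _⟩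
  have hι : Function.Injective ι := fun i j h => Subtype.ext (congrArg (fun e : E => e.1.2) h)
  let r : (E → G) →* (s → G) := MonoidHom.pi fun i => Pi.evalMonoidHom _ (ι i)
  have hr : Function.Surjective r := fun τ =>
    ⟨Function.extend ι τ 1, funext (hι.extend_apply τ 1)⟩
  let e := Equiv.ofBijective _ (restrictSchreierGen_bijective (Q := Q) (G := G))
  have he : ∀ f (i : s), e f (ι i) = f ⟨of i, hs i i.2⟩ :=
    fun f i => congrArg f (Subtype.ext (schreierGen_mk_one (hs i i.2)))
  have hfib : {f : Q →* G // ∀ i (hi : i ∈ s), f ⟨of i, hs i hi⟩ = σ i} ≃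
      r ⁻¹' {fun i : s => σ i} :=
    e.subtypeEquiv fun f => by simp [r, funext_iff, he]
  rw [Nat.card_congr hfib, ← Nat.card_eq_finsetCard, ← Nat.card_fun,
    MonoidHom.card_preimage_singleton_mul_card hr, Nat.card_congr e]

end Basis

end Schreier

section HomMeasure

open FreeGroup (of valuesOn)

variable {G : Type} [Group G]

def basicCylinder (s : Finset ℕ) (σ : ℕ → G) : Set (FreeGroup ℕ →* G) :=
  {h | ∀ i ∈ s, h (of i) = σ i}

variable (G) in
def basicCylinders : Set (Set (FreeGroup ℕ →* G)) := {S | ∃ s σ, basicCylinder s σ = S}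

lemma measurableSet_apply_eq (w : FreeGroup ℕ) (g : G) :
    MeasurableSet {h : FreeGroup ℕ →* G | h w = g} := by
  let _ : MeasurableSpace G := ⊤
  have hm : Measurable fun h : FreeGroup ℕ →* G => h w :=
    (measurable_pi_apply w).comp (comap_measurable _)
  exact hm (t := {g}) MeasurableSpace.measurableSet_top

lemma measurableSet_basicCylinder (s : Finset ℕ) (σ : ℕ → G) :
    MeasurableSet (basicCylinder s σ) := by
  have : basicCylinder s σ = ⋂ i ∈ s, {h : FreeGroup ℕ →* G | h (of i) = σ i} := by
    ext
    simp [basicCylinder]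
  rw [this]
  exact .biInter s.countable_toSet fun i _ => measurableSet_apply_eq _ _

lemma measurable_comp_right (χ : FreeGroup ℕ →* FreeGroup ℕ) :
    Measurable fun h : FreeGroup ℕ →* G => h.comp χ := by
  let _ : MeasurableSpace G := ⊤
  rintro _ ⟨S, hS, rfl⟩
  exact ⟨_, measurable_pi_lambda _ (fun w => measurable_pi_apply (χ w)) hS, rfl⟩

lemma preimage_valuesOn_singleton (T : Finset ℕ) (x : T → G) :
    valuesOn T ⁻¹' {x} = basicCylinder T (Function.extend (↑) x 1) := by
  ext h
  simp only [Set.mem_preimage, Set.mem_singleton_iff, funext_iff, basicCylinder,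
    Set.mem_ofPred_eq, valuesOn, Subtype.forall]
  refine forall₂_congr fun t ht => ?_
  rw [← Subtype.val_injective.extend_apply x 1 ⟨t, ht⟩]

lemma isPiSystem_basicCylinders : IsPiSystem (basicCylinders G) := by
  classical
  rintro _ ⟨s, σ, rfl⟩ _ ⟨s', σ', rfl⟩ ⟨h₀, h₀s, h₀s'⟩
  refine ⟨s ∪ s', s.piecewise σ σ', ?_⟩
  ext h
  simp only [basicCylinder, Set.mem_inter_iff, Set.mem_ofPred_eq, Finset.mem_union]
  constructor
  · intro hh
    refine ⟨fun i hi => by simpa [hi] using hh i (.inl hi), fun i hi => ?_⟩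
    by_cases his : i ∈ s
    · rw [hh i (.inl his), Finset.piecewise_eq_of_mem _ _ _ his, ← h₀s i his, h₀s' i hi]
    · simpa [his] using hh i (.inr hi)
  · rintro ⟨hs, hs'⟩ i hi
    by_cases his : i ∈ s
    · simpa [his] using hs i his
    · simpa [his] using hs' i (hi.resolve_left his)

variable (G) in
lemma homMS_eq_generateFrom [Finite G] :
    homMS G = MeasurableSpace.generateFrom (basicCylinders G) := by
  refine le_antisymm ?_ (MeasurableSpace.generateFrom_le ?_)
  · let _ : MeasurableSpace G := ⊤
    let _ : MeasurableSpace (FreeGroup ℕ →* G) := MeasurableSpace.generateFrom (basicCylinders G)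
    show MeasurableSpace.comap (fun f : FreeGroup ℕ →* G => (f : FreeGroup ℕ → G)) _ ≤ _
    rw [← measurable_iff_comap_le]
    refine measurable_pi_iff.mpr fun w => measurable_to_countable' fun g => ?_
    obtain ⟨T, w', rfl⟩ := FreeGroup.exists_finset_mem_range_map w
    have hw : (fun h : FreeGroup ℕ →* G => h (FreeGroup.map (↑) w')) ⁻¹' {g} =
        ⋃ x ∈ {x | FreeGroup.lift x w' = g}, valuesOn T ⁻¹' {x} := by
      ext h
      simp [← MonoidHom.comp_apply, ← FreeGroup.lift_valuesOn]
    rw [hw]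
    exact .biUnion (Set.to_countable _) fun x _ =>
      MeasurableSpace.measurableSet_generateFrom ⟨T, _, (preimage_valuesOn_singleton T x).symm⟩
  · rintro _ ⟨s, σ, rfl⟩
    exact measurableSet_basicCylinder s σ

variable [Fintype G] {μ : Measure (FreeGroup ℕ →* G)}

lemma measure_preimage_valuesOn
    (hcyl : ∀ s σ, μ (basicCylinder s σ) = (Fintype.card G : ℝ≥0∞)⁻¹ ^ s.card)
    (T : Finset ℕ) (B : Set (T → G)) :
    μ (valuesOn T ⁻¹' B) = Nat.card B * (Fintype.card G : ℝ≥0∞)⁻¹ ^ T.card := by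
  have hB : B.Finite := B.toFinite
  rw [Nat.card_eq_card_finite_toFinset hB]
  conv_lhs => rw [← hB.coe_toFinset]
  rw [← sum_measure_preimage_singleton _ fun x _ => by
    rw [preimage_valuesOn_singleton]; exact measurableSet_basicCylinder _ _]
  simp only [preimage_valuesOn_singleton, hcyl, Finset.sum_const, nsmul_eq_mul]

theorem measure_preimage_comp_basicCylinder
    (hcyl : ∀ s σ, μ (basicCylinder s σ) = (Fintype.card G : ℝ≥0∞)⁻¹ ^ s.card)
    (ψ : FreeGroup ℕ ≃* FreeGroup ℕ) (s : Finset ℕ) (σ : ℕ → G) :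
    μ ((fun h : FreeGroup ℕ →* G => h.comp ψ.toMonoidHom) ⁻¹' basicCylinder s σ) =
      (Fintype.card G : ℝ≥0∞)⁻¹ ^ s.card := by
  classical
  choose T hT using fun i => FreeGroup.exists_finset_mem_range_map (ψ (of i))
  set U := s.biUnion T
  set Q := (FreeGroup.map ((↑) : U → ℕ)).range.map ψ.symm.toMonoidHom
  have hQ : ∀ i ∈ s, of i ∈ Q := fun i hi => Subgroup.mem_map_equiv.mpr <|
    FreeGroup.range_map_subtype_val_mono (Finset.subset_biUnion_of_mem T hi) (hT i)
  let β := FreeGroup.valuesOnEquivHom U ψ (G := G)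
  have hpre : (fun h : FreeGroup ℕ →* G => h.comp ψ.toMonoidHom) ⁻¹' basicCylinder s σ =
      valuesOn U ⁻¹' {x | ∀ i (hi : i ∈ s), β x ⟨of i, hQ i hi⟩ = σ i} := by
    ext h
    exact forall₂_congr fun i hi => by rw [FreeGroup.valuesOnEquivHom_valuesOn]; rfl
  have hcard : Nat.card {x | ∀ i (hi : i ∈ s), β x ⟨of i, hQ i hi⟩ = σ i} =
      Nat.card {f : Q →* G // ∀ i (hi : i ∈ s), f ⟨of i, hQ i hi⟩ = σ i} :=
    Nat.card_congr (β.subtypeEquiv fun _ => Iff.rfl)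
  have hfib := Schreier.card_hom_fiber_mul_card_pow s hQ σ
  rw [← Nat.card_congr β, Nat.card_fun, Nat.card_eq_finsetCard, Nat.card_eq_fintype_card (α := G),
    ← hcard] at hfib
  rw [hpre, measure_preimage_valuesOn hcyl]
  exact ENNReal.natCast_mul_inv_pow_eq Fintype.card_ne_zero hfib

end HomMeasure

/-- If `μ` is the Borel probability measure on `Hom(FreeGroup ℕ, G)` (G finite) giving each
cylinder set `Cyl(e₁,…,e_k; σ₁,…,σ_k)` measure `1/|G|^k`, then for every automorphism `φ`
of the free group, the map `h ↦ h ∘ φ⁻¹` preserves `μ`. -/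
theorem stmt1 (G : Type) [Group G] [Fintype G]
    (μ : Measure (FreeGroup ℕ →* G)) [IsProbabilityMeasure μ]
    (hcyl : ∀ (s : Finset ℕ) (σ : ℕ → G),
      μ {h : FreeGroup ℕ →* G | ∀ i ∈ s, h (FreeGroup.of i) = σ i}
        = ((Fintype.card G : ENNReal))⁻¹ ^ s.card)
    (φ : FreeGroup ℕ ≃* FreeGroup ℕ) :
    Measure.map (fun h : FreeGroup ℕ →* G => h.comp φ.symm.toMonoidHom) μ = μ := by
  have hΦ := measurable_comp_right (G := G) φ.symm.toMonoidHom
  refine ext_of_generate_finite _ (homMS_eq_generateFrom G) isPiSystem_basicCylinders ?_ ?_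
  · rintro _ ⟨s, σ, rfl⟩
    rw [Measure.map_apply hΦ (measurableSet_basicCylinder s σ)]
    exact (measure_preimage_comp_basicCylinder hcyl φ.symm s σ).trans (hcyl s σ).symm
  · rw [Measure.map_apply hΦ .univ, Set.preimage_univ]
end

section
/- Let Γ be a free group on countably many generators, d ≥ 2, G a subgroup of the symmetric group Π_d acting transitively on {1,…,d}, and μ the product probability measure on Hom(Γ, G). Then the set of h ∈ Hom(Γ, G) whose image h(Γ) does not act transitively on {1,…,d} has μ-measure zero. -/
open MeasureTheory

/-!
If no element of `h(Γ)` sends `i` to `j`, then every generator is mapped into the proper subset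
`T = {g ∈ G | g i ≠ j}` of `G`. Under `μ` the first `k` generators are independent and uniform on `G`,
so this has probability at most `(|T| / |G|) ^ k → 0`; it remains to take the union over the
finitely many pairs `(i, j)`.
-/

open scoped ENNReal

namespace FreeGroup

variable {G : Type} [Group G] {μ : Measure (FreeGroup ℕ →* G)}

theorem measure_forall_of_mem_le
    (hcyl : ∀ (s : Finset ℕ) (σ : ℕ → G),
      μ {h : FreeGroup ℕ →* G | ∀ i ∈ s, h (of i) = σ i} = (Nat.card G : ℝ≥0∞)⁻¹ ^ s.card)
    (T : Finset G) (k : ℕ) :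
    μ {h : FreeGroup ℕ →* G | ∀ n, h (of n) ∈ T} ≤ (T.card / Nat.card G : ℝ≥0∞) ^ k := by
  let extend (σ : Fin k → T) (n : ℕ) : G := if hn : n < k then σ ⟨n, hn⟩ else 1
  have hcover : {h : FreeGroup ℕ →* G | ∀ n, h (of n) ∈ T} ⊆
      ⋃ σ : Fin k → T, {h | ∀ n ∈ Finset.range k, h (of n) = extend σ n} := by
    intro h hh
    refine Set.mem_iUnion.2 ⟨fun m => ⟨h (of m), hh m⟩, fun n hn => ?_⟩
    simp [extend, Finset.mem_range.1 hn]
  calc μ {h : FreeGroup ℕ →* G | ∀ n, h (of n) ∈ T}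
      ≤ ∑ σ : Fin k → T, μ {h | ∀ n ∈ Finset.range k, h (of n) = extend σ n} :=
        (measure_mono hcover).trans (measure_iUnion_fintype_le _ _)
    _ = ∑ _σ : Fin k → T, (Nat.card G : ℝ≥0∞)⁻¹ ^ k := by
        simp only [hcyl, Finset.card_range]
    _ = (T.card / Nat.card G : ℝ≥0∞) ^ k := by
        rw [Finset.sum_const, Finset.card_univ, Fintype.card_fun, Fintype.card_fin,
          Fintype.card_coe, nsmul_eq_mul, ENNReal.div_eq_inv_mul, mul_pow, mul_comm]
        push_cast
        rfl

theorem measure_forall_of_mem_eq_zero [Fintype G]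
    (hcyl : ∀ (s : Finset ℕ) (σ : ℕ → G),
      μ {h : FreeGroup ℕ →* G | ∀ i ∈ s, h (of i) = σ i} = (Nat.card G : ℝ≥0∞)⁻¹ ^ s.card)
    {T : Finset G} {g : G} (hg : g ∉ T) :
    μ {h : FreeGroup ℕ →* G | ∀ n, h (of n) ∈ T} = 0 := by
  have hratio : (T.card / Nat.card G : ℝ≥0∞) < 1 := by
    rw [ENNReal.div_lt_iff (Or.inl (by simp)) (Or.inl (by simp)), one_mul, Nat.card_eq_fintype_card]
    exact_mod_cast Finset.card_lt_univ_of_notMem hg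
  exact le_antisymm (ge_of_tendsto' (ENNReal.tendsto_pow_atTop_nhds_zero_of_lt_one hratio)
    (measure_forall_of_mem_le hcyl T)) zero_le

end FreeGroup

theorem stmt4_general (d : ℕ) (G : Subgroup (Equiv.Perm (Fin d)))
    (hG : ∀ i j : Fin d, ∃ g ∈ G, g i = j)
    (μ : Measure (FreeGroup ℕ →* G))
    (hcyl : ∀ (s : Finset ℕ) (σ : ℕ → G),
      μ {h : FreeGroup ℕ →* G | ∀ i ∈ s, h (FreeGroup.of i) = σ i}
        = ((Nat.card G : ENNReal))⁻¹ ^ s.card) :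
    μ {h : FreeGroup ℕ →* G |
        ¬ ∀ i j : Fin d, ∃ x : FreeGroup ℕ, ((h x : Equiv.Perm (Fin d))) i = j} = 0 := by
  classical
  let avoiding (i j : Fin d) : Finset G := {g | (g : Equiv.Perm (Fin d)) i ≠ j}
  have hcover : {h : FreeGroup ℕ →* G |
        ¬ ∀ i j : Fin d, ∃ x : FreeGroup ℕ, ((h x : Equiv.Perm (Fin d))) i = j} ⊆
      ⋃ i, ⋃ j, {h | ∀ n, h (FreeGroup.of n) ∈ avoiding i j} := by
    intro h hh
    push Not at hh
    obtain ⟨i, j, hij⟩ := hh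
    simpa [avoiding] using ⟨i, j, fun n => hij _⟩
  refine measure_mono_null hcover (measure_iUnion_null fun i => measure_iUnion_null fun j => ?_)
  obtain ⟨g, hgG, hgij⟩ := hG i j
  exact FreeGroup.measure_forall_of_mem_eq_zero hcyl
    (g := ⟨g, hgG⟩) (by simp [avoiding, hgij])

/-- Let `Γ` be a free group on countably many generators, `d ≥ 2`, `G` a subgroup of the
symmetric group on `{1,…,d}` acting transitively, and `μ` the product probability measure
on `Hom(Γ, G)` (giving each cylinder set on `k` distinct generators measure `1/|G|^k`).
Then the set of `h` whose image does not act transitively on `{1,…,d}` has `μ`-measure 0. -/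
theorem stmt4 (d : ℕ) (hd : 2 ≤ d) (G : Subgroup (Equiv.Perm (Fin d)))
    (hG : ∀ i j : Fin d, ∃ g ∈ G, g i = j)
    (μ : Measure (FreeGroup ℕ →* G)) [IsProbabilityMeasure μ]
    (hcyl : ∀ (s : Finset ℕ) (σ : ℕ → G),
      μ {h : FreeGroup ℕ →* G | ∀ i ∈ s, h (FreeGroup.of i) = σ i}
        = ((Nat.card G : ENNReal))⁻¹ ^ s.card) :
    μ {h : FreeGroup ℕ →* G |
        ¬ ∀ i j : Fin d, ∃ x : FreeGroup ℕ, ((h x : Equiv.Perm (Fin d))) i = j} = 0 :=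
  stmt4_general d G hG μ hcyl
end

section
/- Let ⟨g_m⟩_{m∈ℤ} be the G-sequence of a homomorphism h : π₁(S,s₀) → G for Chamanara's surface, i.e., g_m = h ∘ φ_δ^{-m}(γ_1). Then for all k, n ∈ ℤ: h ∘ φ_δ^{-k}(γ_n) equals g_{k+n−1} g_{k+n}^{-1} g_{k+n+1}^{-1} ⋯ g_{k−1}^{-1} if n < 0; equals g_{k−1} if n = 0; equals g_k if n = 1; and equals g_k^{-1} g_{k+1}^{-1} ⋯ g_{k+n−2}^{-1} g_{k+n−1} if n > 1. -/
/-!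
Write `a k n = h (φ^{-k} (γ_n))`. Since `φ^{-(k+1)} = φ^{-k} ∘ φ⁻¹`, the formulas defining `φ⁻¹`
turn into recurrences that trade one step in `k` for one step in `n`:
`a k (n+1) = g_k⁻¹ · a (k+1) n` for `n > 0`, `a (k+1) 0 = g_k`, and
`a (k+1) n = a k (n+1) · g_k⁻¹` for `n < 0`. Starting from `a k 1 = g_k`, induction on `|n|`
unwinds them into the stated products.
-/

section RecurrenceSolution

variable {G : Type*} [Group G] (F : ℤ → ℤ → G) (g : ℤ → G)

theorem eq_prod_of_recurrence_pos (hone : ∀ k, F k 1 = g k)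
    (hsucc : ∀ k n, 0 < n → F k (n + 1) = (g k)⁻¹ * F (k + 1) n) (m : ℕ) (k : ℤ) :
    F k (m + 1) = ((List.range m).map fun i : ℕ => (g (k + i))⁻¹).prod * g (k + m) := by
  induction m generalizing k with
  | zero => simpa using hone k
  | succ m ih =>
    rw [Nat.cast_succ, hsucc k _ (by positivity), ih, List.prod_range_succ', ← mul_assoc]
    simp only [Nat.cast_succ, Nat.cast_zero, add_zero, add_assoc, add_comm (1 : ℤ)]

theorem eq_prod_of_recurrence_nonpos (hzero : ∀ k, F (k + 1) 0 = g k)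
    (hpred : ∀ k n, n < 0 → F (k + 1) n = F k (n + 1) * (g k)⁻¹) (m : ℕ) (k : ℤ) :
    F k (-m) = g (k - m - 1) * ((List.range m).map fun i : ℕ => (g (k - m + i))⁻¹).prod := by
  induction m generalizing k with
  | zero => simpa using hzero (k - 1)
  | succ m ih =>
    obtain ⟨k, rfl⟩ : ∃ k', k = k' + 1 := ⟨k - 1, by ring⟩
    rw [hpred k _ (by omega), show -((m + 1 : ℕ) : ℤ) + 1 = -m by push_cast; ring, ih,
      List.prod_range_succ, ← mul_assoc]
    push_cast
    ring_nf

end RecurrenceSolution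

/-- Let `π₁(S,s₀)` be the free group on generators `{γ_n : n ∈ ℤ}` and `φ_δ` the
automorphism with `φ_δ⁻¹(γ_n) = γ_{n+1} γ₁⁻¹` for `n < 0`, `φ_δ⁻¹(γ₀) = γ₁`, and
`φ_δ⁻¹(γ_n) = γ₁ γ_{n+1}` for `n > 0`. For a homomorphism `h : π₁(S,s₀) → G`, let
`g_m = h(φ_δ^{-m}(γ₁))` be its `G`-sequence. Then for all `k, n ∈ ℤ`:
`h(φ_δ^{-k}(γ_n))` equals `g_{k+n-1} g_{k+n}⁻¹ g_{k+n+1}⁻¹ ⋯ g_{k-1}⁻¹` if `n < 0`,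
equals `g_{k-1}` if `n = 0`, equals `g_k` if `n = 1`, and equals
`g_k⁻¹ g_{k+1}⁻¹ ⋯ g_{k+n-2}⁻¹ g_{k+n-1}` if `n > 1`. -/
theorem stmt9 {G : Type} [Group G] (φ : MulAut (FreeGroup ℤ))
    (hφ : ∀ n : ℤ, φ⁻¹ (FreeGroup.of n) =
      if n < 0 then FreeGroup.of (n + 1) * (FreeGroup.of (1 : ℤ))⁻¹
      else if n = 0 then FreeGroup.of (1 : ℤ)
      else FreeGroup.of (1 : ℤ) * FreeGroup.of (n + 1))
    (h : FreeGroup ℤ →* G)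
    (g : ℤ → G) (hg : ∀ m : ℤ, g m = h ((φ ^ (-m)) (FreeGroup.of (1 : ℤ)))) :
    ∀ k n : ℤ, h ((φ ^ (-k)) (FreeGroup.of n)) =
      if n < 0 then
        g (k + n - 1) * ((List.range (-n).toNat).map (fun i => (g (k + n + i))⁻¹)).prod
      else if n = 0 then g (k - 1)
      else if n = 1 then g k
      else ((List.range (n - 1).toNat).map (fun i => (g (k + i))⁻¹)).prod * g (k + n - 1) := by
  let F : ℤ → FreeGroup ℤ →* G := fun k => h.comp (φ ^ (-k)).toMonoidHom
  have hstep (k : ℤ) (x : FreeGroup ℤ) : F (k + 1) x = F k (φ⁻¹ x) := by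
    simp only [F, MonoidHom.comp_apply, neg_add, zpow_add, zpow_neg_one, MulEquiv.coe_toMonoidHom,
      MulAut.mul_apply]
  have hone (k : ℤ) : F k (.of 1) = g k := (hg k).symm
  have hsucc (k n : ℤ) (hn : 0 < n) : F k (.of (n + 1)) = (g k)⁻¹ * F (k + 1) (.of n) := by
    rw [hstep, hφ, if_neg hn.not_gt, if_neg hn.ne', map_mul, hone, inv_mul_cancel_left]
  have hzero (k : ℤ) : F (k + 1) (.of 0) = g k := by
    rw [hstep, hφ, if_neg (lt_irrefl 0), if_pos rfl, hone]
  have hpred (k n : ℤ) (hn : n < 0) : F (k + 1) (.of n) = F k (.of (n + 1)) * (g k)⁻¹ := by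
    rw [hstep, hφ, if_pos hn, map_mul, map_inv, hone]
  have hpos := eq_prod_of_recurrence_pos (fun k n => F k (.of n)) g hone hsucc
  have hnonpos := eq_prod_of_recurrence_nonpos (fun k n => F k (.of n)) g hzero hpred
  intro k n
  change F k (.of n) = _
  -- the statement's `List.range` is coerced to a list of integers through the list monad
  simp only [← List.map_eq_flatMap, List.bind_eq_flatMap, List.pure_def, List.map_map,
    Function.comp_def]
  split_ifs with hn_neg hn_zero hn_one
  · obtain ⟨m, rfl⟩ : ∃ m : ℕ, n = -m := ⟨(-n).toNat, by omega⟩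
    simpa only [← sub_eq_add_neg, neg_neg, Int.toNat_natCast] using hnonpos m k
  · subst hn_zero
    simpa using hnonpos 0 k
  · subst hn_one
    exact hone k
  · obtain ⟨m, rfl⟩ : ∃ m : ℕ, n = m + 1 := ⟨(n - 1).toNat, by omega⟩
    simpa only [add_sub_cancel_right, ← add_assoc, Int.toNat_natCast] using hpos m k
end

section
/- The map sending a homomorphism h : F(ℤ) → G to its G-sequence ⟨h(φ_δ^{-m}(γ_1))⟩_{m∈ℤ} ∈ G^ℤ is a bijection (indeed a homeomorphism for the product topologies) from Hom(F(ℤ), G) to G^ℤ, and it conjugates the action h ↦ h ∘ φ_δ^{-1} to the shift map on G^ℤ. -/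
/-- The topology of pointwise convergence on `Hom(FreeGroup ℤ, G)`. -/
noncomputable instance homTopZ (G : Type) [Group G] [TopologicalSpace G] :
    TopologicalSpace (FreeGroup ℤ →* G) :=
  TopologicalSpace.induced (fun f => (f : FreeGroup ℤ → G)) Pi.topologicalSpace

/-!
Write `b_m = φ_δ^{-m}(γ₁)`, so that `φ_δ⁻¹ b_m = b_{m+1}`. Inverting the defining formulas of
`φ_δ` letter by letter gives `γ_{k+1} = b_0⁻¹ ⋯ b_{k-1}⁻¹ b_k` and
`γ_{-k} = b_{-k-1} b_{-k}⁻¹ ⋯ b_{-1}⁻¹` (`genWord b`). These words are unitriangular, so a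
sequence `u` is determined by `genWord u`; hence a homomorphism is determined by its values on
the `b_m`, and `FreeGroup.lift (genWord u)` takes the value `u m` on `b_m`. Thus the `b_m` form a
free basis and evaluation on it is a bijection `Hom(F(ℤ), G) ≃ G^ℤ` conjugating `h ↦ h ∘ φ_δ⁻¹`
to the shift. It is continuous, and `Hom(F(ℤ), G)` is closed in the compact space `G^{F(ℤ)}`,
so it is a homeomorphism.
-/

open FreeGroup (of lift)

section Words

variable {H K F : Type*} [Group H] [Group K] [FunLike F H K] [MonoidHomClass F H K] (u : ℤ → H)

/-- `(u 0)⁻¹ * (u 1)⁻¹ * ⋯ * (u (k - 1))⁻¹`. -/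
def invProdPos : ℕ → H
  | 0 => 1
  | k + 1 => invProdPos k * (u k)⁻¹

/-- `(u (-k))⁻¹ * ⋯ * (u (-2))⁻¹ * (u (-1))⁻¹`. -/
def invProdNeg : ℕ → H
  | 0 => 1
  | k + 1 => (u (-k - 1))⁻¹ * invProdNeg k

/-- If `u m = φ^{-m} γ₁`, then `genWord u n` is the word in the `u m` equal to `γ_n`. -/
def genWord (n : ℤ) : H :=
  if 0 < n then invProdPos u (n - 1).toNat * u (n - 1) else u (n - 1) * invProdNeg u n.natAbs

lemma genWord_natCast_add_one (k : ℕ) : genWord u (k + 1) = invProdPos u k * u k := by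
  simp [genWord, show (0 : ℤ) < k + 1 by omega]

lemma genWord_neg_natCast (k : ℕ) : genWord u (-k) = u (-k - 1) * invProdNeg u k := by
  simp [genWord]

lemma map_invProdPos (f : F) (k : ℕ) : f (invProdPos u k) = invProdPos (f ∘ u) k := by
  induction k with
  | zero => simp [invProdPos]
  | succ k ih => simp [invProdPos, ih]

lemma map_invProdNeg (f : F) (k : ℕ) : f (invProdNeg u k) = invProdNeg (f ∘ u) k := by
  induction k with
  | zero => simp [invProdNeg]
  | succ k ih => simp [invProdNeg, ih]

lemma map_genWord (f : F) (n : ℤ) : f (genWord u n) = genWord (f ∘ u) n := by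
  unfold genWord
  split_ifs <;> simp [map_invProdPos, map_invProdNeg]

lemma invProdPos_succ' (k : ℕ) :
    invProdPos u (k + 1) = (u 0)⁻¹ * invProdPos (fun i => u (i + 1)) k := by
  induction k with
  | zero => simp [invProdPos]
  | succ k ih =>
    rw [invProdPos, ih, invProdPos, mul_assoc]
    push_cast
    rfl

lemma invProdNeg_succ' (k : ℕ) :
    invProdNeg u (k + 1) = invProdNeg (fun i => u (i - 1)) k * (u (-1))⁻¹ := by
  induction k with
  | zero => simp [invProdNeg]
  | succ k ih =>
    rw [invProdNeg, ih, invProdNeg, mul_assoc]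
    congr 3
    push_cast
    ring

lemma genWord_injective : Function.Injective (genWord (H := H)) := by
  intro u v huv
  have hpos (k : ℕ) : invProdPos u k = invProdPos v k := by
    induction k with
    | zero => rfl
    | succ k ih =>
      have huvk : u k = v k := by
        simpa [genWord_natCast_add_one, ih] using congrFun huv (k + 1)
      rw [invProdPos, invProdPos, ih, huvk]
  have hneg (k : ℕ) : invProdNeg u k = invProdNeg v k := by
    induction k with
    | zero => rfl
    | succ k ih =>
      have huvk : u (-k - 1) = v (-k - 1) := by
        simpa [genWord_neg_natCast, ih] using congrFun huv (-k)
      rw [invProdNeg, invProdNeg, ih, huvk]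
  funext m
  rcases m with k | k
  · simpa [genWord_natCast_add_one, hpos] using congrFun huv (k + 1)
  · simpa [genWord_neg_natCast, hneg, Int.negSucc_eq, sub_eq_add_neg, add_comm]
      using congrFun huv (-k)

end Words

section Orbit

variable {H : Type*} [Group H] (φ : MulAut H) (x : H)

def invOrbit (m : ℤ) : H := (φ ^ (-m)) x

lemma invOrbit_zero : invOrbit φ x 0 = x := by simp [invOrbit]

lemma invOrbit_neg_one : invOrbit φ x (-1) = φ x := by simp [invOrbit]

lemma invOrbit_add_one (m : ℤ) : invOrbit φ x (m + 1) = φ⁻¹ (invOrbit φ x m) := by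
  rw [invOrbit, invOrbit, neg_add_rev, zpow_add, zpow_neg_one]
  rfl

lemma apply_invOrbit (m : ℤ) : φ (invOrbit φ x m) = invOrbit φ x (m - 1) := by
  rw [← MulAut.apply_inv_self H φ (invOrbit φ x (m - 1)), ← invOrbit_add_one, sub_add_cancel]

lemma inv_comp_invOrbit : ⇑φ⁻¹ ∘ invOrbit φ x = fun m => invOrbit φ x (m + 1) :=
  funext fun m => (invOrbit_add_one φ x m).symm

lemma comp_invOrbit : ⇑φ ∘ invOrbit φ x = fun m => invOrbit φ x (m - 1) :=
  funext (apply_invOrbit φ x)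

end Orbit

/-- `φ` is the paper's `φ_δ`, with `γ_n = FreeGroup.of n`. -/
def IsDeltaAut (φ : MulAut (FreeGroup ℤ)) : Prop :=
  ∀ n : ℤ, φ⁻¹ (of n) =
    if n < 0 then of (n + 1) * (of (1 : ℤ))⁻¹
    else if n = 0 then of (1 : ℤ)
    else of (1 : ℤ) * of (n + 1)

namespace IsDeltaAut

variable {φ : MulAut (FreeGroup ℤ)} (hφ : IsDeltaAut φ)
include hφ

local notation "b" => invOrbit φ (of (1 : ℤ))

lemma of_zero : of (0 : ℤ) = b (-1) := by
  have h := hφ 0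
  simp only [lt_irrefl, if_false, if_true] at h
  rw [invOrbit_neg_one, ← h, MulAut.apply_inv_self]

lemma of_natCast_add_one (k : ℕ) : of ((k : ℤ) + 1) = genWord b (k + 1) := by
  rw [genWord_natCast_add_one]
  induction k with
  | zero => simp [invProdPos, invOrbit_zero]
  | succ k ih =>
    have h := hφ (k + 1)
    rw [if_neg (by omega), if_neg (by omega), ih, _root_.map_mul, map_invProdPos, inv_comp_invOrbit,
      ← invOrbit_add_one] at h
    rw [invProdPos_succ', invOrbit_zero, mul_assoc, Nat.cast_succ, h, inv_mul_cancel_left]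

lemma of_neg_natCast (k : ℕ) : of (-(k : ℤ)) = genWord b (-k) := by
  rw [genWord_neg_natCast]
  induction k with
  | zero => simpa [invProdNeg] using of_zero hφ
  | succ k ih =>
    have h := congrArg φ (hφ (-k - 1))
    rw [if_pos (by omega), MulAut.apply_inv_self, sub_add_cancel, _root_.map_mul, map_inv, ih,
      _root_.map_mul, apply_invOrbit, map_invProdNeg, comp_invOrbit, ← invOrbit_neg_one, mul_assoc,
      ← invProdNeg_succ'] at h
    rw [Nat.cast_succ, neg_add', h]

lemma of_eq_genWord (n : ℤ) : of n = genWord b n := by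
  obtain ⟨k, rfl | rfl⟩ := Int.eq_nat_or_neg n
  · cases k with
    | zero => exact of_neg_natCast hφ 0
    | succ k => exact_mod_cast of_natCast_add_one hφ k
  · exact of_neg_natCast hφ k

variable {G : Type*} [Group G]

lemma hom_ext {f g : FreeGroup ℤ →* G} (h : ⇑f ∘ b = ⇑g ∘ b) : f = g :=
  FreeGroup.ext_hom _ _ fun n => by rw [of_eq_genWord hφ, map_genWord, map_genWord, h]

lemma lift_genWord_comp (u : ℤ → G) : ⇑(lift (genWord u)) ∘ b = u := by
  apply genWord_injective
  funext n
  rw [← map_genWord, ← of_eq_genWord hφ, FreeGroup.lift_apply_of]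

def homEquiv : (FreeGroup ℤ →* G) ≃ (ℤ → G) where
  toFun f := ⇑f ∘ b
  invFun u := lift (genWord u)
  left_inv _ := hom_ext hφ (lift_genWord_comp hφ _)
  right_inv := lift_genWord_comp hφ

end IsDeltaAut

section Topology

variable {G : Type} [Group G] [TopologicalSpace G]

lemma continuous_coe_comp {X : Type*} (x : X → FreeGroup ℤ) :
    Continuous fun f : FreeGroup ℤ →* G => ⇑f ∘ x :=
  continuous_pi fun i => (continuous_apply (x i)).comp continuous_induced_dom

instance [CompactSpace G] [T2Space G] [ContinuousMul G] : CompactSpace (FreeGroup ℤ →* G) :=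
  Topology.IsClosedEmbedding.compactSpace (f := fun f : FreeGroup ℤ →* G => ⇑f)
    ⟨⟨⟨rfl⟩, DFunLike.coe_injective⟩, MonoidHom.isClosed_range_coe _ _⟩

noncomputable def IsDeltaAut.homHomeomorph [CompactSpace G] [T2Space G] [ContinuousMul G]
    {φ : MulAut (FreeGroup ℤ)} (hφ : IsDeltaAut φ) : (FreeGroup ℤ →* G) ≃ₜ (ℤ → G) :=
  (continuous_coe_comp (invOrbit φ (of (1 : ℤ)))).homeoOfEquivCompactToT2 (f := hφ.homEquiv)

end Topology

/-- The map sending a homomorphism `h : F(ℤ) → G` (G a finite discrete group) to its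
`G`-sequence `⟨h(φ_δ^{-m}(γ₁))⟩_{m∈ℤ} ∈ G^ℤ` is a bijection — indeed a homeomorphism for
the product topologies — from `Hom(F(ℤ), G)` to `G^ℤ`, and it conjugates the action
`h ↦ h ∘ φ_δ⁻¹` to the shift map on `G^ℤ`. -/
theorem stmt10 (G : Type) [Group G] [Fintype G] [TopologicalSpace G] [DiscreteTopology G]
    (φ : MulAut (FreeGroup ℤ))
    (hφ : ∀ n : ℤ, φ⁻¹ (FreeGroup.of n) =
      if n < 0 then FreeGroup.of (n + 1) * (FreeGroup.of (1 : ℤ))⁻¹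
      else if n = 0 then FreeGroup.of (1 : ℤ)
      else FreeGroup.of (1 : ℤ) * FreeGroup.of (n + 1))
    (Θ : (FreeGroup ℤ →* G) → (ℤ → G))
    (hΘ : ∀ (h : FreeGroup ℤ →* G) (m : ℤ),
      Θ h m = h ((φ ^ (-m)) (FreeGroup.of (1 : ℤ)))) :
    Function.Bijective Θ ∧
    (∃ e : (FreeGroup ℤ →* G) ≃ₜ (ℤ → G), ⇑e = Θ) ∧
    (∀ (h : FreeGroup ℤ →* G) (m : ℤ),
      Θ (h.comp (φ⁻¹ : MulAut (FreeGroup ℤ)).toMonoidHom) m = Θ h (m + 1)) := by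
  have hδ : IsDeltaAut φ := hφ
  obtain rfl : Θ = hδ.homEquiv := funext fun h => funext (hΘ h)
  refine ⟨hδ.homEquiv.bijective, ⟨hδ.homHomeomorph, rfl⟩, fun h m => ?_⟩
  exact congrArg h (invOrbit_add_one φ _ m).symm
end

section
/- Let Γ be the free group on generators {γ_i : i ∈ ℤ*} (ℤ* = ℤ \ {0}), and consider Hom(Γ, ℤ/2ℤ) identified with functions h : ℤ* → ℤ/2ℤ. Define τ¹_*(h)(i) = h(−i)+h(i−1)+h(i)+h(i+1) if i < −2; h(−i)+h(−2)+h(−3) if i = −2; h(−i)+h(−2) if i = −1; h(−i) if i > 0. For k ≥ 2, let C_k = {h : h(k)=h(−k−1)=1 and h(i)=0 for −k−1 < i < k}. Then for every k ≥ 2 and h ∈ C_k, the proximity P(τ¹_*(h)) = k+1, where P(h) = min{|i| : h(i) ≠ 0}. -/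
/-! For `i > 0` we have `τ¹_*(h)(i) = h(-i)`, which vanishes for `i ≤ k` and equals
`h(-k-1) = 1` at `i = k + 1`. For `-k ≤ i < 0` the terms of `τ¹_*(h)(i)` other than
`h(-i) + h(i - 1)` are values of `h` on `[i, -1]`, hence zero, and `h(-i) = h(i - 1)`, both
being `1` exactly when `i = -k`; so the sum vanishes in characteristic `2`. -/

/-- The map `τ¹_*` on functions `ℤ* → ℤ/2ℤ` (encoded as functions on `ℤ` whose value at
`0` is irrelevant and set to `0`). -/
def tau1 (h : ℤ → ZMod 2) : ℤ → ZMod 2 := fun i =>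
  if i < -2 then h (-i) + h (i - 1) + h i + h (i + 1)
  else if i = -2 then h (-i) + h (-2) + h (-3)
  else if i = -1 then h (-i) + h (-2)
  else if i = 0 then 0
  else h (-i)

/-- The map `τ⁻¹_*` on functions `ℤ* → ℤ/2ℤ`. -/
def tauNeg1 (h : ℤ → ZMod 2) : ℤ → ZMod 2 := fun i =>
  if i < 0 then h (-i)
  else if i = 0 then 0
  else if i = 1 then h (-i) + h 2
  else if i = 2 then h (-i) + h 2 + h 3
  else h (-i) + h (i - 1) + h i + h (i + 1)

/-- The cylinder set `C_k = {h : h(k) = h(-k-1) = 1, h(i) = 0 for -k-1 < i < k, i ≠ 0}`. -/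
def Cyl (k : ℤ) : Set (ℤ → ZMod 2) :=
  {h | h k = 1 ∧ h (-k - 1) = 1 ∧ ∀ i : ℤ, -k - 1 < i → i < k → i ≠ 0 → h i = 0}

/-- `HasProx h k` says the proximity `P(h) = min {|i| : h(i) ≠ 0}` equals `k`. -/
def HasProx (h : ℤ → ZMod 2) (k : ℤ) : Prop :=
  (h k ≠ 0 ∨ h (-k) ≠ 0) ∧ ∀ i : ℤ, i ≠ 0 → |i| < k → h i = 0

lemma tau1_apply_of_pos (h : ℤ → ZMod 2) {i : ℤ} (hi : 0 < i) : tau1 h i = h (-i) := by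
  simp only [tau1, if_neg (show ¬i < -2 by omega), if_neg (show i ≠ -2 by omega),
    if_neg (show i ≠ -1 by omega), if_neg hi.ne']

lemma tau1_apply_of_neg (h : ℤ → ZMod 2) {i : ℤ} (hi : i < 0)
    (hzero : ∀ j, i ≤ j → j < 0 → h j = 0) : tau1 h i = h (-i) + h (i - 1) := by
  unfold tau1
  split_ifs with h₁ h₂ h₃
  · rw [hzero i le_rfl hi, hzero (i + 1) (by omega) (by omega), add_zero, add_zero]
  · subst h₂
    rw [hzero (-2) le_rfl (by norm_num), add_zero]
    rfl
  · subst h₃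
    rfl
  all_goals omega

namespace Cyl

variable {k : ℤ} {h : ℤ → ZMod 2}

lemma apply_eq_zero (hh : h ∈ Cyl k) {i : ℤ} (hlo : -k - 1 < i) (hhi : i < k) (hi : i ≠ 0) :
    h i = 0 :=
  hh.2.2 i hlo hhi hi

/-- Both sides equal `1` exactly when `i = -k`. -/
lemma apply_neg_eq_apply_sub_one (hh : h ∈ Cyl k) {i : ℤ} (hlo : -k ≤ i) (hi : i < 0) :
    h (-i) = h (i - 1) := by
  obtain rfl | hlt := hlo.eq_or_lt
  · rw [neg_neg, hh.1, ← hh.2.1, sub_eq_add_neg, add_comm]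
  · rw [apply_eq_zero hh (by omega) (by omega) (by omega),
      apply_eq_zero hh (by omega) (by omega) (by omega)]

end Cyl

lemma tau1_apply_eq_zero_of_mem_Cyl {k : ℤ} {h : ℤ → ZMod 2} (hh : h ∈ Cyl k) {i : ℤ}
    (hi : i ≠ 0) (hik : |i| ≤ k) : tau1 h i = 0 := by
  obtain ⟨hlo, hhi⟩ := abs_le.mp hik
  rcases hi.lt_or_gt with hneg | hpos
  · rw [tau1_apply_of_neg h hneg fun j hij hj => Cyl.apply_eq_zero hh (by omega) (by omega) hj.ne,
      Cyl.apply_neg_eq_apply_sub_one hh hlo hneg, CharTwo.add_self_eq_zero]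
  · rw [tau1_apply_of_pos h hpos, Cyl.apply_eq_zero hh (by omega) (by omega) (by omega)]

lemma tau1_apply_add_one_of_mem_Cyl {k : ℤ} (hk : 0 ≤ k) {h : ℤ → ZMod 2} (hh : h ∈ Cyl k) :
    tau1 h (k + 1) = 1 := by
  rw [tau1_apply_of_pos h (by omega), neg_add', hh.2.1]

/-- For every `k ≥ 2` and `h ∈ C_k`, the proximity of `τ¹_*(h)` is `k + 1`. -/
theorem stmt11 (k : ℤ) (hk : 2 ≤ k) (h : ℤ → ZMod 2) (hh : h ∈ Cyl k) :
    HasProx (tau1 h) (k + 1) := by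
  refine ⟨Or.inl ?_, fun i hi hik => tau1_apply_eq_zero_of_mem_Cyl hh hi (by omega)⟩
  rw [tau1_apply_add_one_of_mem_Cyl (by omega) hh]
  exact one_ne_zero
end

section
/- With notation as above (functions h : ℤ* → ℤ/2ℤ, cylinder sets C_k, and the maps τ¹_*, τ^{-1}_* given by τ^{-1}_*(h)(i) = h(−i) if i < 0; h(−i)+h(2) if i = 1; h(−i)+h(2)+h(3) if i = 2; h(−i)+h(i−1)+h(i)+h(i+1) if i > 2): for every integer k ≥ 2, τ^{-1}_*(C_{k+1}) ⊆ C_k. -/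
/-! `τ⁻¹_*(h)(i)` reads `h` only at `-i`, `i - 1`, `i`, `i + 1`. For `h ∈ C_{k+1}` all of these
vanish when `-k - 1 < i < k`, except at `i = k`, where the term `h(k + 1) = 1` survives. -/

section tauNeg1

variable {h : ℤ → ZMod 2} {i n : ℤ}

theorem tauNeg1_apply_of_neg (hi : i < 0) : tauNeg1 h i = h (-i) := if_pos hi

theorem tauNeg1_apply_one : tauNeg1 h 1 = h (-1) + h 2 := rfl

theorem tauNeg1_apply_two : tauNeg1 h 2 = h (-2) + h 2 + h 3 := rfl

theorem tauNeg1_apply_of_two_lt (hi : 2 < i) :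
    tauNeg1 h i = h (-i) + h (i - 1) + h i + h (i + 1) := by
  simp only [tauNeg1, if_neg (show ¬i < 0 by omega), if_neg (show i ≠ 0 by omega),
    if_neg (show i ≠ 1 by omega), if_neg (show i ≠ 2 by omega)]

theorem tauNeg1_eq_zero_of_vanishes_on_Icc (hz : ∀ j, j ≠ 0 → -n ≤ j → j ≤ n → h j = 0)
    (hl : -n ≤ i) (hr : i < n) (hi : i ≠ 0) : tauNeg1 h i = 0 := by
  rcases lt_or_gt_of_ne hi with hneg | hpos
  · rw [tauNeg1_apply_of_neg hneg, hz (-i) (by omega) (by omega) (by omega)]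
  obtain rfl | rfl | h3 : i = 1 ∨ i = 2 ∨ 2 < i := by omega
  · rw [tauNeg1_apply_one, hz (-1) (by omega) (by omega) (by omega),
      hz 2 (by omega) (by omega) (by omega), add_zero]
  · rw [tauNeg1_apply_two, hz (-2) (by omega) (by omega) (by omega),
      hz 2 (by omega) (by omega) (by omega), hz 3 (by omega) (by omega) (by omega), add_zero,
      add_zero]
  · rw [tauNeg1_apply_of_two_lt h3, hz (-i) (by omega) (by omega) (by omega),
      hz (i - 1) (by omega) (by omega) (by omega), hz i (by omega) (by omega) (by omega),
      hz (i + 1) (by omega) (by omega) (by omega), add_zero, add_zero, add_zero]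

theorem tauNeg1_apply_self_of_vanishes_on_Icc (hz : ∀ j, j ≠ 0 → -n ≤ j → j ≤ n → h j = 0)
    (hn : 2 ≤ n) : tauNeg1 h n = h (n + 1) := by
  rcases hn.eq_or_lt with rfl | h3
  · rw [tauNeg1_apply_two, hz (-2) (by omega) (by omega) (by omega),
      hz 2 (by omega) (by omega) (by omega), zero_add, zero_add]
    rfl
  · rw [tauNeg1_apply_of_two_lt h3, hz (-n) (by omega) (by omega) (by omega),
      hz (n - 1) (by omega) (by omega) (by omega), hz n (by omega) (by omega) (by omega),
      zero_add, zero_add, zero_add]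

end tauNeg1

theorem eq_zero_of_mem_Cyl {h : ℤ → ZMod 2} {k : ℤ} (hh : h ∈ Cyl (k + 1)) :
    ∀ j, j ≠ 0 → -k ≤ j → j ≤ k → h j = 0 := fun j hj hl hr ↦
  hh.2.2 j (by omega) (by omega) hj

/-- For every integer `k ≥ 2`, `τ⁻¹_*(C_{k+1}) ⊆ C_k`. -/
theorem stmt12 (k : ℤ) (hk : 2 ≤ k) : tauNeg1 '' Cyl (k + 1) ⊆ Cyl k := by
  rintro _ ⟨h, hh, rfl⟩
  have hz := eq_zero_of_mem_Cyl hh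
  refine ⟨?_, ?_, fun i hl hr hi ↦ tauNeg1_eq_zero_of_vanishes_on_Icc hz (by omega) hr hi⟩
  · rw [tauNeg1_apply_self_of_vanishes_on_Icc hz hk, hh.1]
  · rw [tauNeg1_apply_of_neg (by omega), neg_sub, sub_neg_eq_add, add_comm, hh.1]
end

section
/- With the same setup (h : ℤ* → ℤ/2ℤ, proximity P, cylinder sets C_k, map τ¹_*): if k ≥ 2, P(h) = k, and h ∉ C_k, then either P(τ¹_*(h)) = k−1 and τ¹_*(h) ∉ C_{k−1}, or P(τ²_*(h)) = k−1 and τ²_*(h) ∉ C_{k−1}, where τ²_* = τ¹_* ∘ τ¹_*. -/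
/-
Write `V_k` for the functions vanishing on `0 < |i| < k`. For `h ∈ V_k`, the value `τ¹_* h (i)`
with `|i| < k - 1` only reads `h` on `0 < |j| < k`, so `τ¹_* h ∈ V_{k-1}`; moreover
`τ¹_* h (k - 1) = h (1 - k) = 0`, so `τ¹_* h ∉ C_{k-1}`, and `τ¹_* h (1 - k) = h (-k)`.
Hence one step of `τ¹_*` lowers the proximity when `h (-k) = 1`. Otherwise `h k = 1`, and
`h ∉ C_k` forces `h (-k - 1) = 0`; then `τ¹_* h ∈ V_k` with
`τ¹_* h (-k) = h k + h (-k) + h (-k - 1) = 1`, and a second step lowers the proximity.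
-/

lemma ZMod.eq_one_of_ne_zero_two : ∀ {a : ZMod 2}, a ≠ 0 → a = 1 := by decide

def VanishesBelow (h : ℤ → ZMod 2) (k : ℤ) : Prop :=
  ∀ i : ℤ, i ≠ 0 → |i| < k → h i = 0

section

variable {h : ℤ → ZMod 2} {k : ℤ}

lemma VanishesBelow.eq_zero (hz : VanishesBelow h k) {i : ℤ} (hi : i ≠ 0) (hlo : -k < i)
    (hhi : i < k) : h i = 0 :=
  hz i hi (abs_lt.2 ⟨hlo, hhi⟩)

lemma VanishesBelow.mem_cyl (hz : VanishesBelow h k) (hpos : h k = 1) (hneg : h (-k) = 0)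
    (hnext : h (-k - 1) = 1) : h ∈ Cyl k := by
  refine ⟨hpos, hnext, fun i hlo hhi hi => ?_⟩
  obtain rfl | hik := eq_or_ne i (-k)
  · exact hneg
  · exact hz.eq_zero hi (by omega) hhi

lemma VanishesBelow.vanishesBelow_tau1 (hz : VanishesBelow h k) :
    VanishesBelow (tau1 h) (k - 1) := by
  intro i hi habs
  obtain ⟨hlo, hhi⟩ := abs_lt.1 habs
  simp only [tau1]
  split_ifs <;> simp (disch := omega) [hz.eq_zero]

lemma VanishesBelow.tau1_apply_sub_one (hk : 2 ≤ k) (hz : VanishesBelow h k) :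
    tau1 h (k - 1) = 0 := by
  rw [tau1_apply_of_pos h (by omega)]
  exact hz.eq_zero (by omega) (by omega) (by omega)

lemma VanishesBelow.tau1_apply_neg_sub_one (hk : 2 ≤ k) (hz : VanishesBelow h k) :
    tau1 h (-(k - 1)) = h (-k) := by
  obtain rfl | rfl | hk3 : k = 2 ∨ k = 3 ∨ 3 < k := by omega
  · simp (disch := omega) [tau1, hz.eq_zero]
  · simp (disch := omega) [tau1, hz.eq_zero]
  · rw [tau1, if_pos (by omega), show -(k - 1) - 1 = -k by ring]
    simp (disch := omega) [hz.eq_zero]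

lemma VanishesBelow.tau1_apply_neg (hk : 2 ≤ k) (hz : VanishesBelow h k) :
    tau1 h (-k) = h k + h (-k) + h (-k - 1) := by
  obtain rfl | hk2 := eq_or_lt_of_le hk
  · simp [tau1]
  · rw [tau1, if_pos (by omega), neg_neg]
    simp (disch := omega) [hz.eq_zero]
    ring

lemma VanishesBelow.hasProx_tau1 (hk : 2 ≤ k) (hz : VanishesBelow h k) (hneg : h (-k) ≠ 0) :
    HasProx (tau1 h) (k - 1) :=
  ⟨Or.inr (by rwa [hz.tau1_apply_neg_sub_one hk]), hz.vanishesBelow_tau1⟩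

lemma VanishesBelow.tau1_notMem_cyl (hk : 2 ≤ k) (hz : VanishesBelow h k) :
    tau1 h ∉ Cyl (k - 1) := fun hmem ↦
  zero_ne_one (hz.tau1_apply_sub_one hk ▸ hmem.1)

lemma VanishesBelow.vanishesBelow_tau1_of_neg_eq_zero (hk : 2 ≤ k) (hz : VanishesBelow h k)
    (hneg : h (-k) = 0) : VanishesBelow (tau1 h) k := by
  intro i hi habs
  obtain ⟨hlo, hhi⟩ := abs_lt.1 habs
  obtain rfl | rfl | hik : i = k - 1 ∨ i = -(k - 1) ∨ |i| < k - 1 := by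
    rw [abs_lt]; omega
  · exact hz.tau1_apply_sub_one hk
  · rw [hz.tau1_apply_neg_sub_one hk, hneg]
  · exact hz.vanishesBelow_tau1 i hi hik

end

/-- If `k ≥ 2`, `P(h) = k`, and `h ∉ C_k`, then either `P(τ¹_*(h)) = k - 1` and
`τ¹_*(h) ∉ C_{k-1}`, or `P(τ²_*(h)) = k - 1` and `τ²_*(h) ∉ C_{k-1}`. -/
theorem stmt13 (k : ℤ) (hk : 2 ≤ k) (h : ℤ → ZMod 2)
    (hP : HasProx h k) (hC : h ∉ Cyl k) :
    (HasProx (tau1 h) (k - 1) ∧ tau1 h ∉ Cyl (k - 1)) ∨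
    (HasProx (tau1 (tau1 h)) (k - 1) ∧ tau1 (tau1 h) ∉ Cyl (k - 1)) := by
  obtain ⟨hne, hz⟩ : (h k ≠ 0 ∨ h (-k) ≠ 0) ∧ VanishesBelow h k := hP
  by_cases hneg : h (-k) = 0
  · have hpos : h k = 1 := ZMod.eq_one_of_ne_zero_two (hne.resolve_right (not_not.2 hneg))
    have hnext : h (-k - 1) = 0 := by
      by_contra hnext
      exact hC (hz.mem_cyl hpos hneg (ZMod.eq_one_of_ne_zero_two hnext))
    have hz' := hz.vanishesBelow_tau1_of_neg_eq_zero hk hneg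
    have hneg' : tau1 h (-k) ≠ 0 := by
      rw [hz.tau1_apply_neg hk, hpos, hneg, hnext]
      decide
    exact Or.inr ⟨hz'.hasProx_tau1 hk hneg', hz'.tau1_notMem_cyl hk⟩
  · exact Or.inl ⟨hz.hasProx_tau1 hk hneg, hz.tau1_notMem_cyl hk⟩
end
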